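/- Let I be a monomial ideal of the exterior algebra E with linear quotients relative to u_1,...,u_r, let g : M(I) → G(I) be the decomposition function (g(u) = u_j where j is minimal with u ∈ (u_1,...,u_j)). Then for every monomial u ∈ M(I), u factors as u = g(u)·c(u) for some monomial c(u), and set(g(u)) ∩ supp(c(u)) = ∅. -/

import Mathlib

open ExteriorAlgebra

/-- The `i`-th basis monomial `e_i` of the exterior algebra `E = K⟨e_1,…,e_n⟩`. -/
noncomputable def e (K : Type) [Field K] {n : ℕ} (i : Fin n) :
    ExteriorAlgebra K (Fin n → K) :=
  ι K (Pi.single i 1)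

/-- The monomial `e_μ = e_{i_1} ∧ ⋯ ∧ e_{i_d}` for `μ = {i_1 < ⋯ < i_d}`. -/
noncomputable def eMon (K : Type) [Field K] {n : ℕ} (μ : Finset (Fin n)) :
    ExteriorAlgebra K (Fin n → K) :=
  ((μ.sort (· ≤ ·)).map (e K)).prod

/-- The ideal `(u_1, …, u_j)` generated by the monomials `u_i = e_{μ_i}`, `i ≤ j`. -/
noncomputable def Iupto (K : Type) [Field K] {n r : ℕ}
    (μs : Fin r → Finset (Fin n)) (j : Fin r) :
    Ideal (ExteriorAlgebra K (Fin n → K)) :=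
  Ideal.span {v | ∃ i, i ≤ j ∧ v = eMon K (μs i)}

/-- The ideal `(u_1, …, u_{j-1})` generated by the monomials `u_i = e_{μ_i}`, `i < j`. -/
noncomputable def Ibelow (K : Type) [Field K] {n r : ℕ}
    (μs : Fin r → Finset (Fin n)) (j : Fin r) :
    Ideal (ExteriorAlgebra K (Fin n → K)) :=
  Ideal.span {v | ∃ i, i < j ∧ v = eMon K (μs i)}

/-- `set(u_j) = {k : e_k ∈ (u_1,…,u_{j-1}) : (u_j)}`. -/
noncomputable def setIdx (K : Type) [Field K] {n r : ℕ}
    (μs : Fin r → Finset (Fin n)) (j : Fin r) : Set (Fin n) :=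
  {k | e K k * eMon K (μs j) ∈ Ibelow K μs j}

/-- The monomial ideal generated by `u_1, …, u_r` has linear quotients with
respect to this order: each colon ideal `(u_1,…,u_{j-1}) : (u_j)` is generated
by a subset of the variables `e_1, …, e_n`. -/
def LinearQuotients (K : Type) [Field K] {n r : ℕ}
    (μs : Fin r → Finset (Fin n)) : Prop :=
  ∀ j : Fin r, ∃ S : Finset (Fin n),
    {f : ExteriorAlgebra K (Fin n → K) | f * eMon K (μs j) ∈ Ibelow K μs j}
      = (Ideal.span {v | ∃ k ∈ S, v = e K k} : Set (ExteriorAlgebra K (Fin n → K)))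

/-- `g(e_ν) = u_j`: `j` is the least index with `e_ν ∈ (u_1, …, u_j)`. -/
noncomputable def IsDecomp (K : Type) [Field K] {n r : ℕ}
    (μs : Fin r → Finset (Fin n)) (ν : Finset (Fin n)) (j : Fin r) : Prop :=
  eMon K ν ∈ Iupto K μs j ∧ ∀ i, i < j → eMon K ν ∉ Iupto K μs i

/-!
The monomials `e_μ` form a basis of `E` and multiply up to sign as `e_μ e_τ = ± e_{μ ∪ τ}`
for disjoint `μ, τ`, so a monomial ideal behaves as in the commutative case: `e_τ` lies in the
ideal generated by monomials `e_{μ_i}` iff some `μ_i ⊆ τ`. The nontrivial direction uses the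
algebra endomorphism of `E` sending `e_k` to `0` for `k ∉ τ`: it kills every generator but
fixes `e_τ ≠ 0`. The theorem then follows from minimality of `j`: if `e_k u_j` with
`k ∈ ν \ μ_j` were in `(u_1, …, u_{j-1})`, so would be its multiple `e_ν`.
-/

section

variable {K : Type} [Field K] {n : ℕ}

theorem eMon_eq_basis (μ : Finset (Fin n)) :
    eMon K μ = (Pi.basisFun K (Fin n)).ExteriorAlgebra μ := by
  rw [ExteriorAlgebra.basis_apply_ofCard _ rfl, ιMulti_family, ιMulti_apply, eMon]
  simp only [Set.powersetCard.ofFinEmbEquiv_symm_apply, Finset.orderEmbOfFin_apply,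
    Function.comp_apply, Pi.basisFun_apply, Set.powersetCard.val_ofCard]
  congr 1
  exact List.ext_getElem (by simp) (by simp [e])

theorem eMon_ne_zero (μ : Finset (Fin n)) : eMon K μ ≠ 0 :=
  eMon_eq_basis (K := K) μ ▸ Module.Basis.ne_zero _ _

theorem eMon_mul_eMon_of_disjoint {μ τ : Finset (Fin n)} (h : Disjoint μ τ) :
    ∃ s : ℤˣ, eMon K μ * eMon K τ = s • eMon K (μ ∪ τ) := by
  have := ExteriorAlgebra.basis_mul_of_disjoint (Pi.basisFun K (Fin n))
    (Set.powersetCard.ofCard (rfl : μ.card = _)) (Set.powersetCard.ofCard (rfl : τ.card = _)) h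
  rw [← Finset.disjUnion_eq_union μ τ h]
  simp only [eMon_eq_basis]
  exact ⟨_, this⟩

theorem eMon_mul_eMon_mem_iff {I : Ideal (ExteriorAlgebra K (Fin n → K))} {μ τ : Finset (Fin n)}
    (h : Disjoint μ τ) : eMon K μ * eMon K τ ∈ I ↔ eMon K (μ ∪ τ) ∈ I := by
  obtain ⟨s, hs⟩ := eMon_mul_eMon_of_disjoint (K := K) h
  rw [hs, Submodule.smul_mem_iff']

theorem e_eq_eMon_singleton (k : Fin n) : e K k = eMon K {k} := by
  simp [eMon]

theorem eMon_mem_span_singleton_of_subset {μ ν : Finset (Fin n)} (h : μ ⊆ ν) :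
    eMon K ν ∈ Ideal.span {eMon K μ} := by
  rw [← Finset.sdiff_union_of_subset h, ← eMon_mul_eMon_mem_iff Finset.sdiff_disjoint]
  exact Ideal.mul_mem_left _ _ (Ideal.subset_span rfl)

variable (K) in
noncomputable def killCompl (τ : Finset (Fin n)) :
    ExteriorAlgebra K (Fin n → K) →ₐ[K] ExteriorAlgebra K (Fin n → K) :=
  ExteriorAlgebra.map <|
    (Pi.basisFun K (Fin n)).constr K fun k => if k ∈ τ then Pi.single k 1 else 0

theorem killCompl_e (τ : Finset (Fin n)) (k : Fin n) :
    killCompl K τ (e K k) = if k ∈ τ then e K k else 0 := by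
  rw [killCompl, e, ExteriorAlgebra.map_apply_ι, ← Pi.basisFun_apply, Module.Basis.constr_basis]
  split_ifs <;> simp

theorem killCompl_eMon (τ μ : Finset (Fin n)) :
    killCompl K τ (eMon K μ) = if μ ⊆ τ then eMon K μ else 0 := by
  rw [eMon, map_list_prod, List.map_map]
  split_ifs with h
  · refine congrArg List.prod (List.map_congr_left fun k hk => ?_)
    simp [killCompl_e, h ((Finset.mem_sort _).1 hk)]
  · obtain ⟨k, hkμ, hkτ⟩ := Finset.not_subset.1 h
    refine List.prod_eq_zero (List.mem_map.2 ⟨k, (Finset.mem_sort _).2 hkμ, ?_⟩)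
    simp [killCompl_e, hkτ]

theorem eMon_mem_span_eMon_iff {ι : Type*} (f : ι → Finset (Fin n)) (p : ι → Prop)
    (τ : Finset (Fin n)) :
    eMon K τ ∈ Ideal.span {v | ∃ i, p i ∧ v = eMon K (f i)} ↔ ∃ i, p i ∧ f i ⊆ τ := by
  constructor
  · intro h
    by_contra! hτ
    have hker : Ideal.span {v | ∃ i, p i ∧ v = eMon K (f i)} ≤ RingHom.ker (killCompl K τ) := by
      refine Ideal.span_le.2 ?_
      rintro _ ⟨i, hi, rfl⟩
      simp [RingHom.mem_ker, killCompl_eMon, hτ i hi]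
    have := hker h
    rw [RingHom.mem_ker, killCompl_eMon, if_pos subset_rfl] at this
    exact eMon_ne_zero τ this
  · rintro ⟨i, hi, hsub⟩
    refine Ideal.span_mono ?_ (eMon_mem_span_singleton_of_subset hsub)
    rintro _ rfl
    exact ⟨i, hi, rfl⟩

variable {r : ℕ} (μs : Fin r → Finset (Fin n))

theorem eMon_mem_Iupto_iff (ν : Finset (Fin n)) (j : Fin r) :
    eMon K ν ∈ Iupto K μs j ↔ ∃ i ≤ j, μs i ⊆ ν :=
  eMon_mem_span_eMon_iff μs (· ≤ j) ν

theorem eMon_mem_Ibelow_iff (ν : Finset (Fin n)) (j : Fin r) :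
    eMon K ν ∈ Ibelow K μs j ↔ ∃ i < j, μs i ⊆ ν :=
  eMon_mem_span_eMon_iff μs (· < j) ν

end

theorem stmt15_general {K : Type} [Field K] {n r : ℕ} (μs : Fin r → Finset (Fin n))
    (ν : Finset (Fin n)) (j : Fin r) (hg : IsDecomp K μs ν j) :
    μs j ⊆ ν ∧ setIdx K μs j ∩ ↑(ν \ μs j) = ∅ := by
  obtain ⟨hmem, hmin⟩ := hg
  have hbelow : ∀ i < j, ¬ μs i ⊆ ν := fun i hij hi =>
    hmin i hij ((eMon_mem_Iupto_iff μs ν i).2 ⟨i, le_rfl, hi⟩)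
  have hsub : μs j ⊆ ν := by
    obtain ⟨i, hij, hi⟩ := (eMon_mem_Iupto_iff μs ν j).1 hmem
    obtain rfl | hlt := eq_or_lt_of_le hij
    exacts [hi, absurd hi (hbelow i hlt)]
  refine ⟨hsub, Set.eq_empty_iff_forall_notMem.2 fun k ⟨hk, hkc⟩ => ?_⟩
  obtain ⟨hkν, hkμ⟩ := Finset.mem_sdiff.1 hkc
  change e K k * eMon K (μs j) ∈ Ibelow K μs j at hk
  rw [e_eq_eMon_singleton, eMon_mul_eMon_mem_iff (Finset.disjoint_singleton_left.2 hkμ),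
    eMon_mem_Ibelow_iff] at hk
  obtain ⟨i, hij, hi⟩ := hk
  exact hbelow i hij (hi.trans (Finset.union_subset (Finset.singleton_subset_iff.2 hkν) hsub))

/-- Let `I` have linear quotients with respect to `u_1, …, u_r` and let
`g : M(I) → G(I)` be the decomposition function (`g(u) = u_j` for the least `j`
with `u ∈ (u_1,…,u_j)`). Then every monomial `u = e_ν ∈ M(I)` factors as
`u = g(u)·c(u)` (i.e. the support of `g(u)` is contained in `ν`, with
complementary factor `c(u) = e_{ν \ supp(g(u))}`), and
`set(g(u)) ∩ supp(c(u)) = ∅`. -/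
theorem stmt15 {K : Type} [Field K] {n r : ℕ} (μs : Fin r → Finset (Fin n))
    (hlq : LinearQuotients K μs)
    (ν : Finset (Fin n)) (j : Fin r) (hg : IsDecomp K μs ν j) :
    μs j ⊆ ν ∧ setIdx K μs j ∩ ↑(ν \ μs j) = ∅ :=
  stmt15_general μs ν j hg
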